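/- With the same setup, for C sufficiently large and a_k < x ≤ s_k = 10a_k one has x·f'(x)/f(x) ≥ 1 - ∑_{j=k+1}^∞ s_k/(a_j - s_k) ≥ 1/2. -/

import Mathlib

/-!
Write `f z = C z P(z)` with `P(z) = ∏ (1 - z / a_i)`. The `a_i` grow at least geometrically, so
the product converges locally uniformly and can be differentiated termwise:
`x f'(x) / f(x) = 1 + ∑ x / (x - a_i)`. For `a_k < x ≤ s_k` the terms with `i ≤ k` are positive,
and for `j > k` the term `x / (x - a_j)` is at least `-s_k / (a_j - s_k)`, since `t ↦ t / (a_j - t)`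
increases on `(0, a_j)`. As `a_{j+1} ≥ 8 C a_j`, these tail terms are dominated by
`(1/2)^j / 4`, whose sum is `1/2`, once `C ≥ 7`.
-/

open Complex Filter Finset

section SummableInvSub

variable {𝕜 ι : Type*} [NormedField 𝕜] [CompleteSpace 𝕜] {b : ι → 𝕜}

theorem summable_inv_sub_of_summable_norm_inv (hb0 : ∀ i, b i ≠ 0)
    (hb : Summable fun i => ‖b i‖⁻¹) (z : 𝕜) : Summable fun i => (z - b i)⁻¹ := by
  refine (hb.mul_left 2).of_norm_bounded_eventually ?_
  have hsmall : ∀ᶠ i in cofinite, ‖b i‖⁻¹ * (2 * ‖z‖) ≤ 1 := by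
    refine Tendsto.eventually_le_const one_pos ?_
    simpa using hb.tendsto_cofinite_zero.mul_const (2 * ‖z‖)
  filter_upwards [hsmall] with i hi
  have hbi : 0 < ‖b i‖ := norm_pos_iff.mpr (hb0 i)
  have hz : 2 * ‖z‖ ≤ ‖b i‖ := by rwa [inv_mul_le_iff₀ hbi, mul_one] at hi
  have hdist : ‖b i‖ / 2 ≤ ‖z - b i‖ := by
    have := norm_sub_norm_le (b i) z
    rw [norm_sub_rev] at this
    linarith
  rw [norm_inv, ← div_eq_mul_inv, le_div_iff₀ hbi]
  calc ‖z - b i‖⁻¹ * ‖b i‖ ≤ (‖b i‖ / 2)⁻¹ * ‖b i‖ := by gcongr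
    _ = 2 := by field_simp

end SummableInvSub

section TprodOneSubDiv

variable {b : ℕ → ℂ}

theorem logDeriv_one_sub_div {c : ℂ} (hc : c ≠ 0) (z : ℂ) :
    logDeriv (fun w => 1 - w / c) z = (z - c)⁻¹ := by
  rw [logDeriv_apply, (((hasDerivAt_id' z).div_const c).const_sub 1).deriv]
  rcases eq_or_ne z c with rfl | hz
  · -- both sides are `0`, by the convention `x / 0 = 0`
    simp [hc]
  · have hzc : z - c ≠ 0 := sub_ne_zero.mpr hz
    field_simp
    ring

theorem multipliableLocallyUniformlyOn_one_sub_div (hb : Summable fun i => ‖b i‖⁻¹) (R : ℝ) :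
    MultipliableLocallyUniformlyOn (fun i w => 1 - w / b i) (Metric.ball 0 R) := by
  simp_rw [sub_eq_add_neg]
  refine (hb.mul_left R).multipliableLocallyUniformlyOn_one_add Metric.isOpen_ball
    (.of_forall fun i w hw => ?_) (fun i => by fun_prop)
  rw [norm_neg, norm_div, div_eq_mul_inv]
  gcongr
  exact (mem_ball_zero_iff.mp hw).le

theorem differentiable_tprod_one_sub_div (hb : Summable fun i => ‖b i‖⁻¹) :
    Differentiable ℂ fun w => ∏' i, (1 - w / b i) := by
  intro z
  have hz : z ∈ Metric.ball (0 : ℂ) (‖z‖ + 1) := by simp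
  have hprod := (multipliableLocallyUniformlyOn_one_sub_div hb (‖z‖ + 1)).hasProdLocallyUniformlyOn
  refine (hprod.differentiableOn (.of_forall fun s => ?_) Metric.isOpen_ball z hz).differentiableAt
    (Metric.isOpen_ball.mem_nhds hz)
  simpa [Finset.prod_fn] using DifferentiableOn.finsetProd (fun _ _ => by fun_prop)

theorem tprod_one_sub_div_ne_zero (hb0 : ∀ i, b i ≠ 0) (hb : Summable fun i => ‖b i‖⁻¹) {z : ℂ}
    (hz : ∀ i, z ≠ b i) : ∏' i, (1 - z / b i) ≠ 0 := by
  simp_rw [sub_eq_add_neg]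
  refine tprod_one_add_ne_zero_of_summable (fun i => ?_) ?_
  · rw [← sub_eq_add_neg, sub_ne_zero, ne_eq, eq_div_iff (hb0 i), one_mul]
    exact (hz i).symm
  · simpa [div_eq_mul_inv] using hb.mul_left ‖z‖

theorem logDeriv_tprod_one_sub_div (hb0 : ∀ i, b i ≠ 0) (hb : Summable fun i => ‖b i‖⁻¹) {z : ℂ}
    (hz : ∀ i, z ≠ b i) :
    logDeriv (fun w => ∏' i, (1 - w / b i)) z = ∑' i, (z - b i)⁻¹ := by
  have hzR : z ∈ Metric.ball (0 : ℂ) (‖z‖ + 1) := by simp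
  simp_rw [← logDeriv_one_sub_div (hb0 _) z]
  refine logDeriv_tprod_eq_tsum Metric.isOpen_ball hzR (fun i => ?_) (fun i => by fun_prop) ?_
    (multipliableLocallyUniformlyOn_one_sub_div hb _) (tprod_one_sub_div_ne_zero hb0 hb hz)
  · rw [sub_ne_zero, ne_eq, eq_div_iff (hb0 i), one_mul]
    exact (hz i).symm
  · simpa only [logDeriv_one_sub_div (hb0 _)] using summable_inv_sub_of_summable_norm_inv hb0 hb z

theorem mul_deriv_div_eq_one_add_tsum {C : ℂ} (hC : C ≠ 0) (hb0 : ∀ i, b i ≠ 0)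
    (hb : Summable fun i => ‖b i‖⁻¹) {f : ℂ → ℂ} (hf : ∀ z, f z = C * z * ∏' i, (1 - z / b i))
    {z : ℂ} (hz0 : z ≠ 0) (hz : ∀ i, z ≠ b i) :
    z * deriv f z / f z = 1 + ∑' i, z / (z - b i) := by
  have hfun : f = fun w => C * w * ∏' i, (1 - w / b i) := funext hf
  rw [mul_div_assoc, ← logDeriv_apply, hfun,
    logDeriv_mul z (mul_ne_zero hC hz0) (tprod_one_sub_div_ne_zero hb0 hb hz) (by fun_prop)
      (differentiable_tprod_one_sub_div hb z),
    logDeriv_const_mul z C hC, logDeriv_id', logDeriv_tprod_one_sub_div hb0 hb hz, mul_add,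
    ← tsum_mul_left]
  simp [div_eq_mul_inv, hz0]

end TprodOneSubDiv

theorem two_pow_mul_le_of_two_mul_le {a : ℕ → ℝ} {m : ℕ} (h : ∀ n, m ≤ n → 2 * a n ≤ a (n + 1))
    (j : ℕ) : 2 ^ j * a m ≤ a (j + m) := by
  induction j with
  | zero => simp
  | succ j ih =>
    calc 2 ^ (j + 1) * a m = 2 * (2 ^ j * a m) := by ring
      _ ≤ 2 * a (j + m) := by gcongr
      _ ≤ a (j + 1 + m) := add_right_comm j 1 m ▸ h _ (by omega)

structure GrowthRecurrence (C : ℝ) (a : ℕ → ℝ) : Prop where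
  pos : ∀ k, 1 ≤ k → 0 < a k
  succ_eq : ∀ k, 1 ≤ k → a (k + 1) = 8 * C * a k * ∏ j ∈ Icc 1 (k - 1), (a k / a j)

namespace GrowthRecurrence

variable {C : ℝ} {a : ℕ → ℝ}

theorem mul_le_succ (ha : GrowthRecurrence C a) (hC : 1 ≤ 8 * C) {n : ℕ} (hn : 1 ≤ n) :
    8 * C * a n ≤ a (n + 1) := by
  have of_le : ∀ n, 1 ≤ n → (∀ i ∈ Icc 1 n, a i ≤ a n) → 8 * C * a n ≤ a (n + 1) := by
    intro n hn hle
    have hprod : 1 ≤ ∏ j ∈ Icc 1 (n - 1), (a n / a j) := by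
      refine one_le_prod fun j hj => ?_
      rw [mem_Icc] at hj
      rw [one_le_div (ha.pos j hj.1)]
      exact hle j (mem_Icc.mpr ⟨hj.1, by omega⟩)
    rw [ha.succ_eq n hn]
    exact le_mul_of_one_le_right (by nlinarith [ha.pos n hn]) hprod
  suffices ∀ n, 1 ≤ n → ∀ i ∈ Icc 1 n, a i ≤ a n from of_le n hn (this n hn)
  intro n hn
  induction n, hn using Nat.le_induction with
  | base => simp
  | succ n hn ih =>
    intro i hi
    have hsucc : a n ≤ a (n + 1) :=
      (le_mul_of_one_le_left (ha.pos n hn).le hC).trans (of_le n hn ih)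
    rcases (mem_Icc.mp hi).2.lt_or_eq with hlt | rfl
    · exact (ih i (mem_Icc.mpr ⟨(mem_Icc.mp hi).1, by omega⟩)).trans hsucc
    · rfl

theorem two_mul_le_succ (ha : GrowthRecurrence C a) (hC : 2 ≤ 8 * C) {n : ℕ} (hn : 1 ≤ n) :
    2 * a n ≤ a (n + 1) :=
  (mul_le_mul_of_nonneg_right hC (ha.pos n hn).le).trans (ha.mul_le_succ (by linarith) hn)

theorem monotoneOn (ha : GrowthRecurrence C a) (hC : 1 ≤ 8 * C) : MonotoneOn a (Set.Ici 1) :=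
  monotoneOn_nat_Ici_of_le_succ fun n hn =>
    (le_mul_of_one_le_left (ha.pos n hn).le hC).trans (ha.mul_le_succ hC hn)

theorem two_pow_mul_le (ha : GrowthRecurrence C a) (hC : 2 ≤ 8 * C) {k : ℕ} (hk : 1 ≤ k)
    (j : ℕ) : 2 ^ j * (8 * C * a k) ≤ a (j + k + 1) :=
  (mul_le_mul_of_nonneg_left (ha.mul_le_succ (by linarith) hk) (by positivity)).trans
    (two_pow_mul_le_of_two_mul_le (fun n hn => ha.two_mul_le_succ hC (by omega)) j)

end GrowthRecurrence

theorem summable_norm_inv_of_two_pow_mul_le {b : ℕ → ℝ} {c : ℝ} (hc : 0 < c)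
    (hb : ∀ j, 2 ^ j * c ≤ b j) : Summable fun j => ‖b j‖⁻¹ := by
  refine ((summable_geometric_two).mul_left c⁻¹).of_nonneg_of_le (fun j => by positivity)
    fun j => ?_
  have hbj : 0 < b j := lt_of_lt_of_le (by positivity) (hb j)
  rw [Real.norm_of_nonneg hbj.le, one_div, inv_pow, ← mul_inv]
  exact inv_anti₀ (by positivity) (by linarith [hb j])

section TailBound

variable {s : ℝ} {b : ℕ → ℝ}

theorem div_sub_le_geometric (hs : 0 < s) {j : ℕ} {c : ℝ} (hc : 5 * 2 ^ j * s ≤ c) :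
    s / (c - s) ≤ (1 / 2) ^ j / 4 := by
  have h2j : (1 : ℝ) ≤ 2 ^ j := one_le_pow₀ (by norm_num)
  have hcs : 4 * 2 ^ j * s ≤ c - s := by nlinarith
  rw [div_le_iff₀ (by nlinarith), one_div, inv_pow]
  calc s = (2 ^ j)⁻¹ / 4 * (4 * 2 ^ j * s) := by field_simp
    _ ≤ (2 ^ j)⁻¹ / 4 * (c - s) := by gcongr

theorem summable_div_sub (hs : 0 < s) (hb : ∀ j, 5 * 2 ^ j * s ≤ b j) :
    Summable fun j => s / (b j - s) := by
  refine ((summable_geometric_two).div_const 4).of_nonneg_of_le (fun j => ?_)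
    fun j => div_sub_le_geometric hs (hb j)
  have h2j : (1 : ℝ) ≤ 2 ^ j := one_le_pow₀ (by norm_num)
  exact div_nonneg hs.le (by nlinarith [hb j])

theorem tsum_div_sub_le_half (hs : 0 < s) (hb : ∀ j, 5 * 2 ^ j * s ≤ b j) :
    ∑' j, s / (b j - s) ≤ 1 / 2 := by
  calc ∑' j, s / (b j - s) ≤ ∑' j : ℕ, (1 / 2 : ℝ) ^ j / 4 :=
        (summable_div_sub hs hb).tsum_le_tsum (fun j => div_sub_le_geometric hs (hb j))
          ((summable_geometric_two).div_const 4)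
    _ = 1 / 2 := by rw [tsum_div_const, tsum_geometric_two]; norm_num

end TailBound

theorem neg_div_sub_le_div_sub {x s c : ℝ} (hx : 0 < x) (hxs : x ≤ s) (hsc : s < c) :
    -(s / (c - s)) ≤ x / (x - c) := by
  rw [← neg_div_neg_eq x, neg_sub, neg_div, neg_le_neg_iff,
    div_le_div_iff₀ (by linarith) (by linarith)]
  nlinarith

theorem neg_tsum_le_tsum_div_sub {b : ℕ → ℝ} {x s : ℝ} {k : ℕ} (hx : 0 < x) (hxs : x ≤ s)
    (hhead : ∀ i < k, b i < x) (htail : ∀ j, s < b (j + k))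
    (hb : Summable fun i => x / (x - b i)) (ht : Summable fun j => s / (b (j + k) - s)) :
    -∑' j, s / (b (j + k) - s) ≤ ∑' i, x / (x - b i) := by
  rw [← hb.sum_add_tsum_nat_add k, ← tsum_neg]
  have hhead_nonneg : 0 ≤ ∑ i ∈ range k, x / (x - b i) := sum_nonneg fun i hi =>
    div_nonneg hx.le (sub_nonneg.mpr (hhead i (mem_range.mp hi)).le)
  have htail_le : ∑' j, -(s / (b (j + k) - s)) ≤ ∑' j, x / (x - b (j + k)) :=
    ht.neg.tsum_le_tsum (fun j => neg_div_sub_le_div_sub hx hxs (htail j))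
      ((summable_nat_add_iff k).mpr hb)
  linarith

theorem re_mul_deriv_div_eq_one_add_tsum {C : ℝ} (hC : C ≠ 0) {a : ℕ → ℝ} (ha0 : ∀ i, a i ≠ 0)
    (ha : Summable fun i => ‖a i‖⁻¹) {f : ℂ → ℂ}
    (hf : ∀ z, f z = C * z * ∏' i, (1 - z / (a i : ℂ))) {x : ℝ} (hx0 : x ≠ 0)
    (hx : ∀ i, x ≠ a i) :
    ((x : ℂ) * deriv f x / f x).re = 1 + ∑' i, x / (x - a i) := by
  rw [mul_deriv_div_eq_one_add_tsum (b := fun i => (a i : ℂ)) (ofReal_ne_zero.mpr hC)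
    (fun i => ofReal_ne_zero.mpr (ha0 i)) (by simpa using ha) hf (ofReal_ne_zero.mpr hx0)
    (fun i => by exact_mod_cast hx i)]
  norm_cast

theorem one_sub_tsum_le_re_mul_deriv_div {C : ℝ} (hC : C ≠ 0) {b : ℕ → ℝ} {x s : ℝ} {k : ℕ}
    (hx : 0 < x) (hxs : x ≤ s) (hpos : ∀ i < k, 0 < b i) (hhead : ∀ i < k, b i < x)
    (htail : ∀ j, s < b (j + k)) (hinv : Summable fun i => ‖b i‖⁻¹) {f : ℂ → ℂ}
    (hf : ∀ z, f z = C * z * ∏' i, (1 - z / (b i : ℂ))) :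
    1 - ∑' j, s / (b (j + k) - s) ≤ ((x : ℂ) * deriv f x / f x).re := by
  have hside : ∀ i, x < b i ∨ b i < x ∧ 0 < b i := fun i => by
    rcases lt_or_ge i k with hi | hi
    · exact .inr ⟨hhead i hi, hpos i hi⟩
    · obtain ⟨j, rfl⟩ := Nat.exists_eq_add_of_le' hi
      exact .inl (hxs.trans_lt (htail j))
  have hb0 : ∀ i, b i ≠ 0 := fun i => by rcases hside i with h | h <;> linarith
  have hxb : ∀ i, x ≠ b i := fun i => by rcases hside i with h | h <;> linarith
  have hsum : Summable fun i => x / (x - b i) :=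
    (summable_inv_sub_of_summable_norm_inv hb0 hinv x).mul_left x
  have hsum_tail : Summable fun j => s / (b (j + k) - s) := by
    have := ((summable_nat_add_iff k).mpr
      (summable_inv_sub_of_summable_norm_inv hb0 hinv s)).mul_left (-s)
    refine this.congr fun j => ?_
    rw [← neg_sub, inv_neg, mul_neg, neg_mul, neg_neg, div_eq_mul_inv]
  rw [re_mul_deriv_div_eq_one_add_tsum hC hb0 hinv hf hx.ne' hxb]
  linarith [neg_tsum_le_tsum_div_sub hx hxs hhead htail hsum hsum_tail]

/-- With the main construction, for C sufficiently large, k ≥ 1 and real x with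
a_k < x ≤ s_k = 10a_k one has x·f'(x)/f(x) ≥ 1 - ∑_{j≥k+1} s_k/(a_j - s_k) ≥ 1/2. -/
theorem stmt14 : ∃ C0 : ℝ, ∀ C : ℝ, C0 ≤ C →
    ∀ a : ℕ → ℝ, (∀ k : ℕ, 1 ≤ k → 0 < a k) → a 1 = 1 →
    (∀ k : ℕ, 1 ≤ k → a (k+1) = 8 * C * a k * ∏ j ∈ Finset.Icc 1 (k-1), (a k / a j)) →
    ∀ f : ℂ → ℂ, (∀ z, f z = C * z * ∏' i : ℕ, (1 - z / (a (i+1) : ℂ))) →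
    ∀ k : ℕ, 1 ≤ k → ∀ x : ℝ, a k < x → x ≤ 10 * a k →
      (1 - ∑' j : ℕ, 10 * a k / (a (k+1+j) - 10 * a k) ≤
        ((x : ℂ) * deriv f (x : ℂ) / f (x : ℂ)).re) ∧
      (1 / 2 : ℝ) ≤ 1 - ∑' j : ℕ, 10 * a k / (a (k+1+j) - 10 * a k) := by
  refine ⟨7, fun C hC a hpos _ hrec f hf k hk x hxk hxs => ?_⟩
  have ha : GrowthRecurrence C a := ⟨hpos, hrec⟩
  simp only [show ∀ j, k + 1 + j = j + k + 1 by omega]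
  have hak : 0 < a k := hpos k hk
  have htail : ∀ j, 5 * 2 ^ j * (10 * a k) ≤ a (j + k + 1) := fun j => by
    have := ha.two_pow_mul_le (by linarith) hk j
    nlinarith [mul_nonneg (by linarith : 0 ≤ 8 * C - 50) (by positivity : 0 ≤ 2 ^ j * a k)]
  have hs : 0 < 10 * a k := by positivity
  refine ⟨?_, by linarith [tsum_div_sub_le_half hs htail]⟩
  refine one_sub_tsum_le_re_mul_deriv_div (b := fun i => a (i + 1)) (by positivity)
    (hak.trans hxk) hxs (fun i _ => hpos (i + 1) (by omega))
    (fun i hi => (ha.monotoneOn (by linarith) (Set.mem_Ici.mpr (by omega))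
      (Set.mem_Ici.mpr hk) (by omega)).trans_lt hxk)
    (fun j => lt_of_lt_of_le ?_ (htail j)) ?_ hf
  · nlinarith [one_le_pow₀ (M₀ := ℝ) (a := 2) (n := j) (by norm_num)]
  · exact summable_norm_inv_of_two_pow_mul_le (hpos 1 le_rfl)
      (two_pow_mul_le_of_two_mul_le fun n => ha.two_mul_le_succ (by linarith))
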